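/- In any Banach lattice F possessing a strong order unit e (so that the closed unit ball equals the order interval [-e, e]), every norm bounded disjoint sequence is weakly null. -/

import Mathlib

open Filter Topology

noncomputable section

/-- A set `A` in a normed space is relatively weakly compact if its closure in the weak
topology is compact. -/
def RelWeaklyCompact {Y : Type*} [NormedAddCommGroup Y] [NormedSpace ℝ Y] (A : Set Y) : Prop :=
  IsCompact (closure (toWeakSpace ℝ Y '' A))

/-- A sequence in a normed space is weakly null if it tends to `0` in the weak topology. -/
def WeaklyNullSeq {F : Type*} [NormedAddCommGroup F] [NormedSpace ℝ F] (x : ℕ → F) : Prop :=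
  Tendsto (fun n => toWeakSpace ℝ F (x n)) atTop (𝓝 0)

/-- The weak Dunford–Pettis property of a Banach lattice `F`: every weakly compact operator
from `F` into a Banach space maps disjoint weakly null sequences to norm null sequences. -/
def HasWDP (F : Type*) [NormedAddCommGroup F] [Lattice F] [HasSolidNorm F] [IsOrderedAddMonoid F] [NormedSpace ℝ F] : Prop :=
  ∀ (Y : Type) [NormedAddCommGroup Y] [NormedSpace ℝ Y] [CompleteSpace Y],
    ∀ S : F →L[ℝ] Y, RelWeaklyCompact (S '' Metric.closedBall 0 1) →
      ∀ x : ℕ → F, (Pairwise fun n m => |x n| ⊓ |x m| = 0) → WeaklyNullSeq x →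
        Tendsto (fun n => ‖S (x n)‖) atTop (𝓝 0)

/-
Order-bounded disjoint sequences are weakly null in any normed lattice: for a functional `φ` and
signs chosen so that `φ (± x n) = |φ (x n)|`, the finite sums `y = ∑ ± x n` satisfy
`|y| ≤ ∑ |x n| = ⨆ |x n| ≤ u`, hence `∑ |φ (x n)| = φ y ≤ ‖φ‖ ‖u‖`, so `φ (x n) → 0`.
When the unit ball is `[-e, e]`, a norm bound `‖x n‖ ≤ k` gives the order bound `|x n| ≤ k • e`.
-/

section LatticeOrderedGroup

variable {α : Type*} [AddCommGroup α] [Lattice α] [IsOrderedAddMonoid α]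

lemma inf_add_eq_zero {a b c : α} (ha : 0 ≤ a) (hb : 0 ≤ b) (hc : 0 ≤ c)
    (hab : a ⊓ b = 0) (hac : a ⊓ c = 0) : a ⊓ (b + c) = 0 := by
  refine le_antisymm ?_ (le_inf ha (add_nonneg hb hc))
  have key : a ⊓ (b + c) - a ⊓ c ≤ a ⊓ b := by
    apply le_inf
    · rw [sub_le_iff_le_add]
      exact le_add_of_le_of_nonneg inf_le_left (le_inf ha hc)
    · rw [sub_le_iff_le_add, add_inf]
      exact le_inf (inf_le_left.trans (le_add_of_nonneg_left hb)) inf_le_right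
  rwa [hac, sub_zero, hab] at key

lemma inf_sum_eq_zero {ι : Type*} {a : α} {f : ι → α} {s : Finset ι} (ha : 0 ≤ a)
    (hf : ∀ i, 0 ≤ f i) (h : ∀ i ∈ s, a ⊓ f i = 0) : a ⊓ ∑ i ∈ s, f i = 0 := by
  classical
  induction s using Finset.induction_on with
  | empty => simpa using inf_of_le_right ha
  | insert i s hi ih =>
    rw [Finset.sum_insert hi]
    exact inf_add_eq_zero ha (hf i) (Finset.sum_nonneg fun j _ => hf j)
      (h i (Finset.mem_insert_self i s)) (ih fun j hj => h j (Finset.mem_insert_of_mem hj))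

lemma sum_le_of_pairwise_inf_eq_zero {ι : Type*} {f : ι → α} {b : α} (s : Finset ι)
    (hf : ∀ i, 0 ≤ f i) (hdisj : Pairwise fun i j => f i ⊓ f j = 0) (hb : 0 ≤ b)
    (hfb : ∀ i, f i ≤ b) : ∑ i ∈ s, f i ≤ b := by
  classical
  induction s using Finset.induction_on with
  | empty => simpa using hb
  | insert i s hi ih =>
    have hdisj_s : f i ⊓ ∑ j ∈ s, f j = 0 :=
      inf_sum_eq_zero (hf i) hf fun j hj => hdisj fun hij => hi (hij ▸ hj)
    rw [Finset.sum_insert hi, ← inf_add_sup, hdisj_s, zero_add]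
    exact sup_le (hfb i) ih

end LatticeOrderedGroup

theorem tendsto_toWeakSpace_iff {𝕜 E ι : Type*} [Field 𝕜] [TopologicalSpace 𝕜]
    [IsTopologicalRing 𝕜] [AddCommGroup E] [TopologicalSpace E] [Module 𝕜 E]
    [SeparatingDual 𝕜 E] {l : Filter ι} {f : ι → E} {x : E} :
    Tendsto (fun i => toWeakSpace 𝕜 E (f i)) l (𝓝 (toWeakSpace 𝕜 E x)) ↔
      ∀ φ : StrongDual 𝕜 E, Tendsto (fun i => φ (f i)) l (𝓝 (φ x)) :=
  WeakBilin.tendsto_iff_forall_eval_tendsto _ (separatingDual_iff_injective.mp inferInstance)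

section NormedLattice

variable {F : Type*} [NormedAddCommGroup F] [Lattice F] [IsOrderedAddMonoid F] [NormedSpace ℝ F]

lemma abs_le_nsmul_of_norm_le {e : F} (he : Metric.closedBall (0 : F) 1 = Set.Icc (-e) e)
    {z : F} {n : ℕ} (hz : ‖z‖ ≤ n) : |z| ≤ n • e := by
  rcases n.eq_zero_or_pos with rfl | hn
  · simp [norm_le_zero_iff.mp (by simpa using hz)]
  have hn' : (0 : ℝ) < n := Nat.cast_pos.mpr hn
  have hw : (n : ℝ)⁻¹ • z ∈ Set.Icc (-e) e := by
    rw [← he, mem_closedBall_zero_iff, norm_smul, norm_inv, Real.norm_natCast,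
      inv_mul_le_one₀ hn']
    exact hz
  have hzw : z = n • ((n : ℝ)⁻¹ • z) := by
    rw [← Nat.cast_smul_eq_nsmul ℝ, smul_inv_smul₀ hn'.ne']
  rw [hzw, abs_le', ← smul_neg]
  exact ⟨nsmul_le_nsmul_right hw.2 n, nsmul_le_nsmul_right (neg_le.mpr hw.1) n⟩

variable [HasSolidNorm F]

lemma sum_abs_apply_le_of_pairwise_disjoint {ι : Type*} (φ : StrongDual ℝ F) {x : ι → F}
    (hdisj : Pairwise fun i j => |x i| ⊓ |x j| = 0) {u : F} (hu0 : 0 ≤ u)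
    (hu : ∀ i, |x i| ≤ u) (s : Finset ι) : ∑ i ∈ s, |φ (x i)| ≤ ‖φ‖ * ‖u‖ := by
  classical
  set y : F := ∑ i ∈ s, if 0 ≤ φ (x i) then x i else -x i
  have hφy : φ y = ∑ i ∈ s, |φ (x i)| := by
    rw [map_sum]
    refine Finset.sum_congr rfl fun i _ => ?_
    split_ifs with h
    · exact (abs_of_nonneg h).symm
    · rw [map_neg, abs_of_neg (not_le.mp h)]
  have hy : |y| ≤ u := by
    refine (Finset.le_sum_of_subadditive _ abs_zero.le abs_add_le s _).trans ?_
    have habs : ∀ i, |if 0 ≤ φ (x i) then x i else -x i| = |x i| := fun i => by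
      split_ifs <;> simp
    simp only [habs]
    exact sum_le_of_pairwise_inf_eq_zero s (fun i => abs_nonneg _) hdisj hu0 hu
  calc ∑ i ∈ s, |φ (x i)| = φ y := hφy.symm
    _ ≤ ‖φ y‖ := Real.le_norm_self _
    _ ≤ ‖φ‖ * ‖y‖ := φ.le_opNorm y
    _ ≤ ‖φ‖ * ‖u‖ := by
      gcongr
      exact norm_le_norm_of_abs_le_abs (hy.trans_eq (abs_of_nonneg hu0).symm)

theorem weaklyNullSeq_of_pairwise_disjoint_of_abs_le {x : ℕ → F}
    (hdisj : Pairwise fun n m => |x n| ⊓ |x m| = 0) {u : F} (hu : ∀ n, |x n| ≤ u) :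
    WeaklyNullSeq x := by
  rw [WeaklyNullSeq, ← map_zero (toWeakSpace ℝ F), tendsto_toWeakSpace_iff]
  intro φ
  have hsum : Summable fun n => |φ (x n)| :=
    summable_of_sum_range_le (fun n => abs_nonneg _) fun N =>
      sum_abs_apply_le_of_pairwise_disjoint φ hdisj ((abs_nonneg _).trans (hu 0)) hu _
  rw [map_zero]
  exact hsum.of_abs.tendsto_atTop_zero

end NormedLattice

theorem stmt_9_general (F : Type) [NormedAddCommGroup F] [Lattice F] [HasSolidNorm F] [IsOrderedAddMonoid F] [NormedSpace ℝ F]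
    (e : F) (he : Metric.closedBall (0 : F) 1 = Set.Icc (-e) e)
    (x : ℕ → F) (hbdd : ∃ C, ∀ n, ‖x n‖ ≤ C)
    (hdisj : Pairwise fun n m => |x n| ⊓ |x m| = 0) :
    WeaklyNullSeq x := by
  obtain ⟨C, hC⟩ := hbdd
  obtain ⟨k, hk⟩ := exists_nat_ge C
  exact weaklyNullSeq_of_pairwise_disjoint_of_abs_le hdisj
    fun n => abs_le_nsmul_of_norm_le he ((hC n).trans hk)

/-- In a Banach lattice `F` with a strong order unit `e` for which the closed unit ball is the
order interval `[-e, e]`, every norm bounded disjoint sequence is weakly null. -/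
theorem stmt_9 (F : Type) [NormedAddCommGroup F] [Lattice F] [HasSolidNorm F] [IsOrderedAddMonoid F] [NormedSpace ℝ F] [CompleteSpace F]
    (e : F) (he : Metric.closedBall (0 : F) 1 = Set.Icc (-e) e)
    (x : ℕ → F) (hbdd : ∃ C, ∀ n, ‖x n‖ ≤ C)
    (hdisj : Pairwise fun n m => |x n| ⊓ |x m| = 0) :
    WeaklyNullSeq x :=
  stmt_9_general F e he x hbdd hdisj
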